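/- Let R be a ring in which every proper two-sided ideal is prime. Then for all two-sided ideals I and J of R, either I ⊆ J or J ⊆ I; that is, the two-sided ideals of R form a chain under inclusion. -/
import Mathlib

open Pointwise

/-- The product of two two-sided ideals. -/
def TwoSidedIdeal.prod {R : Type*} [Ring R] (I J : TwoSidedIdeal R) : TwoSidedIdeal R :=
  TwoSidedIdeal.span ((I : Set R) * (J : Set R))

/-- A proper two-sided ideal `P` is prime if `A * B ⊆ P` implies `A ⊆ P` or `B ⊆ P`. -/
def TwoSidedIdeal.IsPrimeIdeal {R : Type*} [Ring R] (P : TwoSidedIdeal R) : Prop :=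
  P ≠ ⊤ ∧ ∀ A B : TwoSidedIdeal R, TwoSidedIdeal.prod A B ≤ P → A ≤ P ∨ B ≤ P

lemma prod_le_inf {R : Type*} [Ring R] (I J : TwoSidedIdeal R) :
    TwoSidedIdeal.prod I J ≤ I ⊓ J := by
  intro x hx
  rw [TwoSidedIdeal.prod, TwoSidedIdeal.mem_span_iff] at hx
  apply hx
  rintro z ⟨a, ha, b, hb, rfl⟩
  exact ⟨I.mul_mem_right a b ha, J.mul_mem_left a b hb⟩

/-- If every proper two-sided ideal of `R` is prime, then the two-sided ideals of `R`
form a chain under inclusion. -/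
theorem ideals_form_chain_of_all_prime {R : Type*} [Ring R]
    (h : ∀ P : TwoSidedIdeal R, P ≠ ⊤ → P.IsPrimeIdeal)
    (I J : TwoSidedIdeal R) : I ≤ J ∨ J ≤ I := by
  by_cases htop : I ⊓ J = ⊤
  · left
    intro x _
    have : x ∈ I ⊓ J := htop ▸ trivial
    exact this.2
  · obtain ⟨-, hp⟩ := h _ htop
    rcases hp I J (prod_le_inf I J) with h1 | h1
    · exact Or.inl fun x hx => (h1 hx).2
    · exact Or.inr fun x hx => (h1 hx).1
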